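/- arXiv:2012.09754 — 5 statements merged into one kernel-verified Lean document; each statement's English description precedes it below -/
import Mathlib

section
/- Let U ⊆ ℝ² be open, let f, g: U → ℝ be C¹, and let h: U → ℝ be C¹ with compact support contained in U. Then ∫_U (∇_f g)·h dμ = ∫_U g·h·∂_z f dμ − ∫_U g·(∇_f h) dμ. -/
/-! The intrinsic gradient `∇_f` is a derivation, `∇_f (g h) = (∇_f g) h + g ∇_f h`, and up to a
zeroth-order term it is a divergence: `∇_f u = ∂_x u - ∂_z (f u) + u ∂_z f`. Although `g` is only
`C¹` on `U`, the product `u = g h` is `C¹` on the whole plane with compact support, and so is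
`f u`; the divergence terms then integrate to zero, leaving `∫ ∇_f (g h) = ∫ g h ∂_z f`. -/

open MeasureTheory Set

/-- Partial derivative in the `x` (first) direction. -/
noncomputable def pdx (g : ℝ × ℝ → ℝ) (p : ℝ × ℝ) : ℝ := fderiv ℝ g p (1, 0)

/-- Partial derivative in the `z` (second) direction. -/
noncomputable def pdz (g : ℝ × ℝ → ℝ) (p : ℝ × ℝ) : ℝ := fderiv ℝ g p (0, 1)

/-- The intrinsic gradient operator `∇_f g = ∂_x g − f·∂_z g`. -/
noncomputable def igrad (f g : ℝ × ℝ → ℝ) (p : ℝ × ℝ) : ℝ := pdx g p - f p * pdz g p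

theorem ContDiffOn.contDiff_mul_of_tsupport_subset {𝕜 E : Type*} [NontriviallyNormedField 𝕜]
    [NormedAddCommGroup E] [NormedSpace 𝕜 E] {n : WithTop ℕ∞} {U : Set E} {g h : E → 𝕜}
    (hg : ContDiffOn 𝕜 n g U) (hU : IsOpen U) (hh : ContDiff 𝕜 n h) (hhU : tsupport h ⊆ U) :
    ContDiff 𝕜 n (fun x ↦ g x * h x) := by
  refine contDiff_iff_contDiffAt.2 fun p ↦ ?_
  by_cases hp : p ∈ U
  · exact (hg.contDiffAt (hU.mem_nhds hp)).mul hh.contDiffAt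
  · have hzero : (fun x ↦ g x * h x) =ᶠ[nhds p] fun _ ↦ 0 := by
      filter_upwards [notMem_tsupport_iff_eventuallyEq.1 (fun hp' ↦ hp (hhU hp'))] with x hx
      simp [hx]
    exact contDiffAt_const.congr_of_eventuallyEq hzero

theorem ContinuousOn.integrableOn_of_support_subset_isCompact {X E : Type*} [TopologicalSpace X]
    [T2Space X] [MeasurableSpace X] [OpensMeasurableSpace X] {μ : Measure X}
    [IsLocallyFiniteMeasure μ] [NormedAddCommGroup E] {φ : X → E} {U K : Set X}
    (hφ : ContinuousOn φ U) (hK : IsCompact K) (hKU : K ⊆ U) (hsupp : Function.support φ ⊆ K) :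
    IntegrableOn φ U μ :=
  ((integrableOn_iff_integrable_of_support_subset hsupp).1
    ((hφ.mono hKU).integrableOn_compact hK)).integrableOn

section FDerivIntegral

variable {E G : Type*} [NormedAddCommGroup E] [NormedSpace ℝ E] [MeasurableSpace E]
  [NormedAddCommGroup G] [NormedSpace ℝ G] {μ : Measure E} {φ : E → G}

theorem HasCompactSupport.integrable_fderiv_apply [OpensMeasurableSpace E]
    [IsFiniteMeasureOnCompacts μ] (hφs : HasCompactSupport φ) (hφ : ContDiff ℝ 1 φ) (v : E) :
    Integrable (fun x ↦ fderiv ℝ φ x v) μ :=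
  ((hφ.continuous_fderiv one_ne_zero).clm_apply continuous_const).integrable_of_hasCompactSupport
    (hφs.fderiv_apply ℝ v)

variable [FiniteDimensional ℝ E] [BorelSpace E] [μ.IsAddHaarMeasure]

theorem HasCompactSupport.integral_fderiv_apply_eq_zero (hφs : HasCompactSupport φ)
    (hφ : ContDiff ℝ 1 φ) (v : E) : ∫ x, fderiv ℝ φ x v ∂μ = 0 := by
  have hparts := integral_smul_fderiv_eq_neg_fderiv_smul_of_integrable (μ := μ) (v := v)
    (f := fun _ ↦ (1 : ℝ)) (g := φ) (by simp)
    (by simpa using hφs.integrable_fderiv_apply hφ v)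
    (by simpa using hφ.continuous.integrable_of_hasCompactSupport hφs)
    (fun x _ ↦ differentiableAt_const _) (fun x _ ↦ hφ.differentiable one_ne_zero x)
  simpa using hparts

theorem HasCompactSupport.setIntegral_fderiv_apply_eq_zero {U : Set E}
    (hφs : HasCompactSupport φ) (hφ : ContDiff ℝ 1 φ) (hφU : tsupport φ ⊆ U) (v : E) :
    ∫ x in U, fderiv ℝ φ x v ∂μ = 0 := by
  rw [setIntegral_eq_integral_of_forall_compl_eq_zero fun x hx ↦ by
    simp [fderiv_of_notMem_tsupport ℝ fun hx' ↦ hx (hφU hx')]]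
  exact hφs.integral_fderiv_apply_eq_zero hφ v

end FDerivIntegral

section IntrinsicGradient

variable {f g h u : ℝ × ℝ → ℝ} {p : ℝ × ℝ} {U : Set (ℝ × ℝ)}

theorem pdx_mul (hg : DifferentiableAt ℝ g p) (hh : DifferentiableAt ℝ h p) :
    pdx (fun q ↦ g q * h q) p = g p * pdx h p + h p * pdx g p := by
  simp [pdx, fderiv_fun_mul hg hh]

theorem pdz_mul (hg : DifferentiableAt ℝ g p) (hh : DifferentiableAt ℝ h p) :
    pdz (fun q ↦ g q * h q) p = g p * pdz h p + h p * pdz g p := by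
  simp [pdz, fderiv_fun_mul hg hh]

theorem igrad_mul (hg : DifferentiableAt ℝ g p) (hh : DifferentiableAt ℝ h p) :
    igrad f (fun q ↦ g q * h q) p = igrad f g p * h p + g p * igrad f h p := by
  simp only [igrad, pdx_mul hg hh, pdz_mul hg hh]
  ring

theorem igrad_eq_pdx_sub_pdz_mul_add (hf : DifferentiableAt ℝ f p)
    (hu : DifferentiableAt ℝ u p) :
    igrad f u p = pdx u p - pdz (fun q ↦ f q * u q) p + u p * pdz f p := by
  rw [igrad, pdz_mul hf hu]
  ring

theorem support_igrad_subset : Function.support (igrad f u) ⊆ tsupport u := fun p hp ↦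
  by_contra fun hp' ↦ hp (by simp [igrad, pdx, pdz, fderiv_of_notMem_tsupport ℝ hp'])

theorem ContDiffOn.continuousOn_pdz (hf : ContDiffOn ℝ 1 f U) (hU : IsOpen U) :
    ContinuousOn (pdz f) U :=
  (hf.continuousOn_fderiv_of_isOpen hU le_rfl).clm_apply continuousOn_const

theorem ContDiffOn.continuousOn_igrad (hf : ContinuousOn f U) (hu : ContDiffOn ℝ 1 u U)
    (hU : IsOpen U) : ContinuousOn (igrad f u) U :=
  have hdu := hu.continuousOn_fderiv_of_isOpen hU le_rfl
  (hdu.clm_apply continuousOn_const).sub (hf.mul (hdu.clm_apply continuousOn_const))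

theorem setIntegral_igrad_eq (hU : IsOpen U) (hf : ContDiffOn ℝ 1 f U) (hu : ContDiff ℝ 1 u)
    (hus : HasCompactSupport u) (huU : tsupport u ⊆ U) :
    ∫ p in U, igrad f u p = ∫ p in U, u p * pdz f p := by
  have hfu := hf.contDiff_mul_of_tsupport_subset hU hu huU
  have hfus : HasCompactSupport fun q ↦ f q * u q := hus.mul_left
  have hdx : IntegrableOn (pdx u) U := (hus.integrable_fderiv_apply hu _).integrableOn
  have hdz : IntegrableOn (pdz fun q ↦ f q * u q) U :=
    (hfus.integrable_fderiv_apply hfu _).integrableOn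
  have hupdz : IntegrableOn (fun p ↦ u p * pdz f p) U :=
    (hu.continuous.continuousOn.mul (hf.continuousOn_pdz hU)
      ).integrableOn_of_support_subset_isCompact hus huU
      ((Function.support_mul_subset_left _ _).trans (subset_tsupport u))
  calc ∫ p in U, igrad f u p
      = ∫ p in U, (pdx u p - pdz (fun q ↦ f q * u q) p + u p * pdz f p) := by
        refine setIntegral_congr_fun hU.measurableSet fun p hp ↦ ?_
        exact igrad_eq_pdx_sub_pdz_mul_add ((hf.differentiableOn one_ne_zero).differentiableAt
          (hU.mem_nhds hp)) (hu.differentiable one_ne_zero p)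
    _ = ∫ p in U, u p * pdz f p := by
        have hdxz : IntegrableOn (fun p ↦ pdx u p - pdz (fun q ↦ f q * u q) p) U := hdx.sub hdz
        have hx0 : ∫ p in U, pdx u p = 0 := hus.setIntegral_fderiv_apply_eq_zero hu huU _
        have hz0 : ∫ p in U, pdz (fun q ↦ f q * u q) p = 0 :=
          hfus.setIntegral_fderiv_apply_eq_zero hfu (tsupport_mul_subset_right.trans huU) _
        rw [integral_add hdxz hupdz, integral_sub hdx hdz, hx0, hz0, sub_zero, zero_add]

end IntrinsicGradient

/-- integration by parts for the intrinsic gradient: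
`∫_U (∇_f g)·h dμ = ∫_U g·h·∂_z f dμ − ∫_U g·(∇_f h) dμ`
for `f, g` C¹ on an open set `U` and `h` C¹ with compact support in `U`. -/
theorem stmt2 (U : Set (ℝ × ℝ)) (hU : IsOpen U) (f g h : ℝ × ℝ → ℝ)
    (hf : ContDiffOn ℝ 1 f U) (hg : ContDiffOn ℝ 1 g U) (hh : ContDiff ℝ 1 h)
    (hhs : HasCompactSupport h) (hhU : tsupport h ⊆ U) :
    ∫ p in U, igrad f g p * h p
      = (∫ p in U, g p * h p * pdz f p) - ∫ p in U, g p * igrad f h p := by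
  have hgradg_h : IntegrableOn (fun p ↦ igrad f g p * h p) U :=
    ((hg.continuousOn_igrad hf.continuousOn hU).mul hh.continuous.continuousOn
      ).integrableOn_of_support_subset_isCompact hhs hhU
      ((Function.support_mul_subset_right _ _).trans (subset_tsupport h))
  have hg_gradh : IntegrableOn (fun p ↦ g p * igrad f h p) U :=
    (hg.continuousOn.mul (hh.contDiffOn.continuousOn_igrad hf.continuousOn hU)
      ).integrableOn_of_support_subset_isCompact hhs hhU
      ((Function.support_mul_subset_right _ _).trans support_igrad_subset)
  have hleibniz : ∫ p in U, igrad f (fun q ↦ g q * h q) p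
      = (∫ p in U, igrad f g p * h p) + ∫ p in U, g p * igrad f h p := by
    rw [← integral_add hgradg_h hg_gradh]
    exact setIntegral_congr_fun hU.measurableSet fun p hp ↦ igrad_mul
      ((hg.differentiableOn one_ne_zero).differentiableAt (hU.mem_nhds hp))
      (hh.differentiable one_ne_zero p)
  have hparts := setIntegral_igrad_eq hU hf (hg.contDiff_mul_of_tsupport_subset hU hh hhU)
    hhs.mul_left (tsupport_mul_subset_right.trans hhU)
  rw [hleibniz] at hparts
  linarith
end

section
/- Let b ∈ ℝ and let f: ℝ² → ℝ be C¹. Define f̂: ℝ² → ℝ by f̂(x,z) = f(x, z + b·x²/2) + b·x. Then the shear automorphism P_b: ℝ³ → ℝ³, P_b(x,y,z) = (x, y + bx, z), maps the intrinsic graph Γ_f bijectively onto Γ_{f̂}, and for every (x,z) ∈ ℝ², ∇_{f̂} f̂(x,z) = ∇_f f(x, z + b·x²/2) + b. -/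
open MeasureTheory Set

/-- The point of the intrinsic graph of `f` over `(x,z) ∈ V₀`. -/
noncomputable def graphPt (f : ℝ × ℝ → ℝ) (p : ℝ × ℝ) : ℝ × ℝ × ℝ :=
  (p.1, f p, p.2 + p.1 * f p / 2)

/-- The intrinsic graph `Γ_f ⊆ ℍ = ℝ³`. -/
noncomputable def Gamma (f : ℝ × ℝ → ℝ) : Set (ℝ × ℝ × ℝ) := Set.range (graphPt f)

/-- The shear automorphism `P_b(x,y,z) = (x, y + bx, z)` of the Heisenberg group. -/
def shear (b : ℝ) (q : ℝ × ℝ × ℝ) : ℝ × ℝ × ℝ := (q.1, q.2.1 + b * q.1, q.2.2)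

/-
Over a base point `(x, z')` of `V₀`, `P_b` sends the graph point of `f` to the point with
`y = f(x,z') + b x = f̂(x,z)` and `z = z' + x f(x,z')/2`, and this is the graph point of `f̂` over `(x, z)` exactly when `z' = z + b x²/2`. Since the base
change `(x,z) ↦ (x, z + b x²/2)` is a bijection of `V₀` and `P_b` is injective, `P_b` maps `Γ_f`
bijectively onto `Γ_f̂`. For the gradient, the chain rule gives `∂_z f̂ = ∂_z f` and
`∂_x f̂ = ∂_x f + b x ∂_z f + b` (at the shifted point), and the term `b x ∂_z f` cancels against
the `b x` in `f̂ = f + b x` inside `∇_f̂ f̂ = ∂_x f̂ - f̂ ∂_z f̂`.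
-/

open ContinuousLinearMap

noncomputable def vshear (b : ℝ) (p : ℝ × ℝ) : ℝ × ℝ := (p.1, p.2 + b * p.1 ^ 2 / 2)

/-- The paper's `f̂`. -/
noncomputable def shearFun (b : ℝ) (f : ℝ × ℝ → ℝ) (p : ℝ × ℝ) : ℝ := f (vshear b p) + b * p.1

lemma vshear_surjective (b : ℝ) : Function.Surjective (vshear b) :=
  fun p => ⟨(p.1, p.2 - b * p.1 ^ 2 / 2), by simp [vshear]⟩

lemma shear_injective (b : ℝ) : Function.Injective (shear b) := by
  rintro ⟨x, y, z⟩ ⟨x', y', z'⟩ h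
  simp only [shear, Prod.mk.injEq] at h
  obtain ⟨rfl, hy, rfl⟩ := h
  rw [add_left_inj] at hy
  rw [hy]

lemma shear_graphPt_vshear (b : ℝ) (f : ℝ × ℝ → ℝ) (p : ℝ × ℝ) :
    shear b (graphPt f (vshear b p)) = graphPt (shearFun b f) p := by
  simp only [shear, graphPt, shearFun, vshear, Prod.mk.injEq, true_and]
  ring

lemma image_shear_Gamma (b : ℝ) (f : ℝ × ℝ → ℝ) :
    shear b '' Gamma f = Gamma (shearFun b f) := by
  rw [Gamma, Gamma, ← (vshear_surjective b).range_comp, ← range_comp]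
  exact congrArg range (funext (shear_graphPt_vshear b f))

lemma hasFDerivAt_vshear (b : ℝ) (p : ℝ × ℝ) :
    HasFDerivAt (vshear b) ((fst ℝ ℝ ℝ).prod (snd ℝ ℝ ℝ + (b * p.1) • fst ℝ ℝ ℝ)) p := by
  refine hasFDerivAt_fst.prodMk (hasFDerivAt_snd.add ?_)
  have hx : HasFDerivAt (fun q : ℝ × ℝ => q.1) (fst ℝ ℝ ℝ) p := hasFDerivAt_fst
  have hsq : (fun q : ℝ × ℝ => b * q.1 ^ 2 / 2) = fun q => b / 2 * (q.1 * q.1) := by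
    ext q
    ring
  rw [hsq]
  refine ((hx.mul hx).const_mul (b / 2)).congr_fderiv ?_
  ext <;> simp; ring

lemma hasFDerivAt_shearFun {b : ℝ} {f : ℝ × ℝ → ℝ} {p : ℝ × ℝ}
    (hf : DifferentiableAt ℝ f (vshear b p)) :
    HasFDerivAt (shearFun b f)
      ((fderiv ℝ f (vshear b p)).comp ((fst ℝ ℝ ℝ).prod (snd ℝ ℝ ℝ + (b * p.1) • fst ℝ ℝ ℝ))
        + b • fst ℝ ℝ ℝ) p :=
  (hf.hasFDerivAt.comp p (hasFDerivAt_vshear b p)).add (hasFDerivAt_fst.const_mul b)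

lemma pdx_shearFun {b : ℝ} {f : ℝ × ℝ → ℝ} {p : ℝ × ℝ}
    (hf : DifferentiableAt ℝ f (vshear b p)) :
    pdx (shearFun b f) p = pdx f (vshear b p) + b * p.1 * pdz f (vshear b p) + b := by
  have hdir : ((1 : ℝ), b * p.1) = ((1 : ℝ), (0 : ℝ)) + (b * p.1) • ((0 : ℝ), (1 : ℝ)) := by
    simp
  simp only [pdx, pdz, (hasFDerivAt_shearFun hf).fderiv, add_apply, comp_apply, prod_apply,
    coe_fst', coe_snd', smul_apply, smul_eq_mul, mul_one, zero_add, add_left_inj]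
  rw [hdir, map_add, map_smul, smul_eq_mul]

lemma pdz_shearFun {b : ℝ} {f : ℝ × ℝ → ℝ} {p : ℝ × ℝ}
    (hf : DifferentiableAt ℝ f (vshear b p)) :
    pdz (shearFun b f) p = pdz f (vshear b p) := by
  simp [pdz, (hasFDerivAt_shearFun hf).fderiv]

lemma igrad_shearFun {b : ℝ} {f : ℝ × ℝ → ℝ} {p : ℝ × ℝ}
    (hf : DifferentiableAt ℝ f (vshear b p)) :
    igrad (shearFun b f) (shearFun b f) p = igrad f f (vshear b p) + b := by
  rw [igrad, igrad, pdx_shearFun hf, pdz_shearFun hf, shearFun]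
  ring

/-- the shear automorphism `P_b` maps `Γ_f` bijectively onto `Γ_f̂`, where
`f̂(x,z) = f(x, z + b·x²/2) + b·x`, and `∇_f̂ f̂(x,z) = ∇_f f(x, z + b·x²/2) + b`. -/
theorem stmt4 (b : ℝ) (f : ℝ × ℝ → ℝ) (hf : ContDiff ℝ 1 f)
    (fhat : ℝ × ℝ → ℝ)
    (hfhat : ∀ x z : ℝ, fhat (x, z) = f (x, z + b * x ^ 2 / 2) + b * x) :
    Set.BijOn (shear b) (Gamma f) (Gamma fhat) ∧
      ∀ x z : ℝ, igrad fhat fhat (x, z) = igrad f f (x, z + b * x ^ 2 / 2) + b := by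
  obtain rfl : fhat = shearFun b f := funext fun p => hfhat p.1 p.2
  refine ⟨?_, fun x z => igrad_shearFun (hf.differentiable one_ne_zero _)⟩
  rw [← image_shear_Gamma]
  exact (shear_injective b).injOn.bijOn_image
end

section
/- Let a > 0 and define f_a: ℝ² → ℝ by f_a(x,z) = −a·sign(z)·√|z| (with sign(0)=0). Then the intrinsic graph Γ_{f_a} is exactly the union of the pairs of horizontal rays of slope ±a²/2 emanating forward from the points of the x-axis: Γ_{f_a} = { (t + s, ε·(a²/2)·s, ε·(a²/4)·t·s) : t ∈ ℝ, s ∈ [0,∞), ε ∈ {1, −1} }, where for each t and ε the curve s ↦ (t,0,0)·(s, ε·(a²/2)·s, 0) (Heisenberg product) is a horizontal ray of slope ε·a²/2. -/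
open MeasureTheory Set

/-- The herringbone function `f_a(x,z) = −a·sign(z)·√|z|`. -/
noncomputable def herringbone (a : ℝ) (p : ℝ × ℝ) : ℝ :=
  -a * Real.sign p.2 * Real.sqrt |p.2|

/-!
Writing `z = -ε r²` with `r ≥ 0` and `ε = ±1`, the herringbone function takes the value
`f_a(x, -ε r²) = ε a r`. With `r = a s / 2` the graph point over `(t + s, -ε r²)` is exactly
the point at parameter `s` of the ray of slope `ε a²/2` from `(t, 0, 0)`; since every `z` has
such a representation, the graph is the union of these rays.
-/

theorem exists_eq_neg_mul_sq (z : ℝ) :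
    ∃ r ε : ℝ, 0 ≤ r ∧ (ε = 1 ∨ ε = -1) ∧ z = -ε * r ^ 2 := by
  rcases le_or_gt z 0 with hz | hz
  · exact ⟨√(-z), 1, Real.sqrt_nonneg _, Or.inl rfl, by
      rw [Real.sq_sqrt (neg_nonneg.2 hz)]; ring⟩
  · exact ⟨√z, -1, Real.sqrt_nonneg _, Or.inr rfl, by rw [Real.sq_sqrt hz.le]; ring⟩

theorem herringbone_neg_mul_sq (a x r ε : ℝ) (hr : 0 ≤ r) (hε : ε = 1 ∨ ε = -1) :
    herringbone a (x, -ε * r ^ 2) = ε * a * r := by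
  rcases hr.eq_or_lt with rfl | hr
  · simp [herringbone]
  have hr2 : 0 < r ^ 2 := by positivity
  rcases hε with rfl | rfl
  · simp only [herringbone, neg_mul, one_mul, Real.sign_of_neg (neg_neg_of_pos hr2), abs_neg,
      abs_of_pos hr2, Real.sqrt_sq hr.le]
    ring
  · simp only [herringbone, neg_neg, one_mul, Real.sign_of_pos hr2, abs_of_pos hr2,
      Real.sqrt_sq hr.le]
    ring

theorem graphPt_herringbone_ray (a t s ε : ℝ) (ha : 0 ≤ a) (hs : 0 ≤ s) (hε : ε = 1 ∨ ε = -1) :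
    graphPt (herringbone a) (t + s, -ε * (a * s / 2) ^ 2)
      = (t + s, ε * (a ^ 2 / 2) * s, ε * (a ^ 2 / 4) * (t * s)) := by
  rw [graphPt, herringbone_neg_mul_sq a _ _ ε (by positivity) hε]
  ext <;> dsimp only <;> ring

/-- for `a > 0`, the intrinsic graph of `f_a(x,z) = −a·sign(z)·√|z|` is the
union of the pairs of horizontal rays of slope `±a²/2` emanating forward from points of
the `x`-axis: `Γ_{f_a} = {(t+s, ε·(a²/2)·s, ε·(a²/4)·t·s) : t ∈ ℝ, s ≥ 0, ε = ±1}`. -/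
theorem stmt9 (a : ℝ) (ha : 0 < a) :
    Gamma (herringbone a)
      = {q : ℝ × ℝ × ℝ | ∃ t s ε : ℝ, 0 ≤ s ∧ (ε = 1 ∨ ε = -1) ∧
          q = (t + s, ε * (a ^ 2 / 2) * s, ε * (a ^ 2 / 4) * (t * s))} := by
  ext q
  constructor
  · rintro ⟨⟨x, z⟩, rfl⟩
    obtain ⟨r, ε, hr, hε, rfl⟩ := exists_eq_neg_mul_sq z
    have hs : 0 ≤ 2 * r / a := by positivity
    refine ⟨x - 2 * r / a, 2 * r / a, ε, hs, hε, ?_⟩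
    rw [← graphPt_herringbone_ray a _ _ ε ha.le hs hε, sub_add_cancel]
    congr 3
    field_simp
  · rintro ⟨t, s, ε, hs, hε, rfl⟩
    exact ⟨_, graphPt_herringbone_ray a t s ε ha.le hs hε⟩
end

section
/- Let a ∈ ℝ and define f_a: ℝ² → ℝ by f_a(x,z) = −a·sign(z)·√|z| (with sign(0)=0). Then f_a admits the distributional intrinsic gradient θ(x,z) = −(a²/2)·sign(z): for every C¹ function ψ: ℝ² → ℝ with compact support, ∫ (−(a²/2)·sign(z))·ψ dμ = ∫ (−f_a·∂_xψ + (f_a²/2)·∂_zψ) dμ. -/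
open MeasureTheory Set

/-!
Since `f_a` depends only on `z` and `f_a² = a²|z|`, integrating first in `x` kills the term
`f_a ∂ₓψ`, while integrating first in `z` reduces the other term to the one-dimensional
integration by parts `∫ |z| h'(z) dz = -∫ sign(z) h(z) dz`. The latter holds because `|·|` is
continuous with derivative `sign` off the countable set `{0}`.
-/

namespace Real

theorem monotone_sign : Monotone Real.sign := by
  intro x y hxy
  rcases lt_trichotomy x 0 with hx | rfl | hx
  · rcases sign_apply_eq y with h | h | h <;> simp [sign_of_neg hx, h]
  · rcases hxy.lt_or_eq with hy | rfl
    · simp [sign_of_pos hy]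
    · rfl
  · rw [sign_of_pos hx, sign_of_pos (hx.trans_le hxy)]

theorem abs_sign_le_one (x : ℝ) : |sign x| ≤ 1 := by
  rcases sign_apply_eq x with h | h | h <;> simp [h]

theorem hasDerivAt_abs_sign {x : ℝ} (hx : x ≠ 0) : HasDerivAt (|·|) (sign x) x := by
  rcases hx.lt_or_gt with hx | hx
  · simpa [sign_of_neg hx] using hasDerivAt_abs_neg hx
  · simpa [sign_of_pos hx] using hasDerivAt_abs_pos hx

theorem sign_sq_mul_abs (x : ℝ) : sign x ^ 2 * |x| = |x| := by
  rcases eq_or_ne x 0 with rfl | hx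
  · simp
  · rcases sign_apply_eq_of_ne_zero x hx with h | h <;> simp [h]

theorem continuous_sign_mul_sqrt_abs : Continuous fun x ↦ sign x * √|x| := by
  have h : (fun x ↦ sign x * √|x|) = fun x ↦ if x ≤ 0 then -√(-x) else √x := by
    funext x
    split_ifs with hx
    · rcases hx.lt_or_eq with hx | rfl
      · simp [sign_of_neg hx, abs_of_neg hx]
      · simp
    · simp [sign_of_pos (not_le.mp hx), abs_of_pos (not_le.mp hx)]
  rw [h]
  exact Continuous.if_le (by fun_prop) (by fun_prop) continuous_id continuous_const
    (fun x hx ↦ by simp [hx])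

end Real

theorem integral_mul_deriv_eq_neg_integral_of_hasDerivAt_off_countable
    {F G h : ℝ → ℝ} {s : Set ℝ} (hs : s.Countable) (hF : Continuous F)
    (hFG : ∀ x ∉ s, HasDerivAt F (G x) x) (hG : LocallyIntegrable G)
    (hh : ContDiff ℝ 1 h) (hc : HasCompactSupport h) :
    ∫ x, F x * deriv h x = -∫ x, G x * h x := by
  obtain ⟨R, hR⟩ := hc.isCompact.isBounded.subset_ball 0
  rw [Real.ball_eq_Ioo, zero_sub, zero_add] at hR
  have hGh : Integrable fun x ↦ G x * h x :=
    hG.integrable_smul_right_of_hasCompactSupport hh.continuous hc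
  have hFh' : Integrable fun x ↦ F x * deriv h x :=
    (hF.mul (hh.continuous_deriv le_rfl)).integrable_of_hasCompactSupport hc.deriv.mul_left
  have hsupp : Function.support (fun x ↦ G x * h x + F x * deriv h x) ⊆ Ioc (-R) R := by
    intro x hx
    refine Ioo_subset_Ioc_self (hR ?_)
    by_contra hx'
    have hd : deriv h x = 0 := Function.notMem_support.mp fun h' ↦ hx' (support_deriv_subset h')
    simp [image_eq_zero_of_notMem_tsupport hx', hd] at hx
  have hend : ∀ x ∉ Ioo (-R) R, F x * h x = 0 := fun x hx ↦ by
    rw [image_eq_zero_of_notMem_tsupport fun h' ↦ hx (hR h'), mul_zero]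
  have hFTC := integral_eq_of_hasDerivAt_off_countable (fun x ↦ F x * h x)
    (fun x ↦ G x * h x + F x * deriv h x) (a := -R) (b := R) hs
    (hF.mul hh.continuous).continuousOn
    (fun x hx ↦ (hFG x hx.2).mul (hh.differentiable one_ne_zero x).hasDerivAt)
    (hGh.add hFh').intervalIntegrable
  rw [hend R (by simp), hend (-R) (by simp), sub_zero,
    intervalIntegral.integral_eq_integral_of_support_subset hsupp, integral_add hGh hFh'] at hFTC
  linarith

theorem HasCompactSupport.comp_mk_left {α β M : Type*} [TopologicalSpace α] [T2Space α]
    [TopologicalSpace β] [Zero M] {ψ : α × β → M} (hc : HasCompactSupport ψ) (z : β) :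
    HasCompactSupport fun x ↦ ψ (x, z) :=
  HasCompactSupport.intro (hc.image continuous_fst) fun _ hx ↦
    image_eq_zero_of_notMem_tsupport fun hmem ↦ hx ⟨_, hmem, rfl⟩

theorem HasCompactSupport.comp_mk_right {α β M : Type*} [TopologicalSpace α]
    [TopologicalSpace β] [T2Space β] [Zero M] {ψ : α × β → M} (hc : HasCompactSupport ψ)
    (x : α) :
    HasCompactSupport fun z ↦ ψ (x, z) :=
  HasCompactSupport.intro (hc.image continuous_snd) fun _ hz ↦
    image_eq_zero_of_notMem_tsupport fun hmem ↦ hz ⟨_, hmem, rfl⟩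

section PartialDerivatives

variable {ψ : ℝ × ℝ → ℝ}

theorem hasDerivAt_pdx (hψ : Differentiable ℝ ψ) (x z : ℝ) :
    HasDerivAt (fun x ↦ ψ (x, z)) (pdx ψ (x, z)) x :=
  (hψ (x, z)).hasFDerivAt.comp_hasDerivAt x ((hasDerivAt_id x).prodMk (hasDerivAt_const x z))

theorem hasDerivAt_pdz (hψ : Differentiable ℝ ψ) (x z : ℝ) :
    HasDerivAt (fun z ↦ ψ (x, z)) (pdz ψ (x, z)) z :=
  (hψ (x, z)).hasFDerivAt.comp_hasDerivAt z ((hasDerivAt_const z x).prodMk (hasDerivAt_id z))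

/-- A non-integrable function has Bochner integral `0`, so no hypothesis on `c` is needed. -/
theorem integral_mul_pdx_eq_zero (hψ : ContDiff ℝ 1 ψ) (hc : HasCompactSupport ψ)
    (c : ℝ → ℝ) :
    ∫ p, c p.2 * pdx ψ p = 0 := by
  by_cases hint : Integrable fun p : ℝ × ℝ ↦ c p.2 * pdx ψ p
  swap
  · exact integral_undef hint
  have hslice : ∀ z, ∫ x, c z * pdx ψ (x, z) = 0 := fun z ↦ by
    simpa [(hasDerivAt_pdx (hψ.differentiable one_ne_zero) _ z).deriv] using
      integral_mul_deriv_eq_neg_integral_of_hasDerivAt_off_countable (G := 0)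
        (h := fun x ↦ ψ (x, z)) countable_empty
        continuous_const (fun x _ ↦ hasDerivAt_const x (c z)) locallyIntegrable_zero
        (hψ.comp (contDiff_id.prodMk contDiff_const)) (hc.comp_mk_left z)
  rw [Measure.volume_eq_prod] at hint ⊢
  simp only [integral_prod_symm _ hint, hslice, integral_zero]

theorem integral_abs_mul_pdz (hψ : ContDiff ℝ 1 ψ) (hc : HasCompactSupport ψ) :
    ∫ p, |p.2| * pdz ψ p = -∫ p, Real.sign p.2 * ψ p := by
  have habs : Integrable fun p : ℝ × ℝ ↦ |p.2| * pdz ψ p :=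
    ((continuous_abs.comp continuous_snd).mul
      ((hψ.continuous_fderiv one_ne_zero).clm_apply continuous_const))
      |>.integrable_of_hasCompactSupport (hc.fderiv_apply ℝ (0, 1)).mul_left
  have hsign : Integrable fun p : ℝ × ℝ ↦ Real.sign p.2 * ψ p :=
    (hψ.continuous.integrable_of_hasCompactSupport hc).bdd_mul
      (Real.monotone_sign.measurable.comp measurable_snd).aestronglyMeasurable
      (ae_of_all _ fun p ↦ Real.abs_sign_le_one p.2)
  have hslice : ∀ x, ∫ z, |z| * pdz ψ (x, z) = -∫ z, Real.sign z * ψ (x, z) := fun x ↦ by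
    simpa [(hasDerivAt_pdz (hψ.differentiable one_ne_zero) x _).deriv] using
      integral_mul_deriv_eq_neg_integral_of_hasDerivAt_off_countable (h := fun z ↦ ψ (x, z))
        (countable_singleton 0)
        continuous_abs (fun z hz ↦ Real.hasDerivAt_abs_sign hz)
        Real.monotone_sign.locallyIntegrable
        (hψ.comp (contDiff_const.prodMk contDiff_id)) (hc.comp_mk_right x)
  rw [Measure.volume_eq_prod] at habs hsign ⊢
  rw [integral_prod _ habs, integral_prod _ hsign, ← integral_neg]
  simp only [hslice]

end PartialDerivatives

theorem continuous_herringbone (a : ℝ) : Continuous (herringbone a) := by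
  have h : herringbone a = fun p ↦ -a * (Real.sign p.2 * √|p.2|) :=
    funext fun p ↦ mul_assoc _ _ _
  rw [h]
  exact continuous_const.mul (Real.continuous_sign_mul_sqrt_abs.comp continuous_snd)

theorem herringbone_sq (a : ℝ) (p : ℝ × ℝ) : herringbone a p ^ 2 = a ^ 2 * |p.2| := by
  rw [herringbone, mul_pow, mul_pow, Real.sq_sqrt (abs_nonneg _), mul_assoc, Real.sign_sq_mul_abs,
    neg_sq]

/-- the herringbone function `f_a` admits the distributional intrinsic
gradient `θ(x,z) = −(a²/2)·sign(z)`. -/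
theorem stmt10 (a : ℝ) :
    ∀ ψ : ℝ × ℝ → ℝ, ContDiff ℝ 1 ψ → HasCompactSupport ψ →
      ∫ p : ℝ × ℝ, (-(a ^ 2 / 2) * Real.sign p.2) * ψ p
        = ∫ p : ℝ × ℝ,
            (-(herringbone a p) * pdx ψ p + (herringbone a p) ^ 2 / 2 * pdz ψ p) := by
  intro ψ hψ hc
  have hcont : Continuous (fderiv ℝ ψ) := hψ.continuous_fderiv one_ne_zero
  have hx : Integrable fun p ↦ -(herringbone a p) * pdx ψ p :=
    ((continuous_herringbone a).neg.mul (hcont.clm_apply continuous_const))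
      |>.integrable_of_hasCompactSupport (hc.fderiv_apply ℝ (1, 0)).mul_left
  have hz : Integrable fun p ↦ herringbone a p ^ 2 / 2 * pdz ψ p :=
    (((continuous_herringbone a).pow 2).div_const 2 |>.mul (hcont.clm_apply continuous_const))
      |>.integrable_of_hasCompactSupport (hc.fderiv_apply ℝ (0, 1)).mul_left
  -- `herringbone a p` only depends on `p.2`, so it is `c p.2` for `c z = herringbone a (0, z)`.
  have hx_zero : ∫ p, -(herringbone a p) * pdx ψ p = 0 :=
    integral_mul_pdx_eq_zero hψ hc fun z ↦ -herringbone a (0, z)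
  rw [integral_add hx hz, hx_zero, zero_add]
  simp only [herringbone_sq, mul_div_right_comm, mul_assoc, integral_const_mul,
    integral_abs_mul_pdz hψ hc]
  ring
end

section
/- Let U ⊆ ℝ² be open and let f: U → ℝ be C² with ∇_f² f = 0 on U. Let I ⊆ ℝ be an interval and let γ = (γ_x, γ_z): I → U be a C¹ integral curve of the intrinsic gradient field, i.e., γ_x'(t) = 1 and γ_z'(t) = −f(γ(t)) for all t ∈ I. Then the lifted curve λ: I → ℝ³, λ(t) = ( γ_x(t), f(γ(t)), γ_z(t) + γ_x(t)·f(γ(t))/2 ), which lies in the intrinsic graph Γ_f, is an affine map: there exist p, v ∈ ℝ³ such that λ(t) = p + t·v for all t ∈ I. In particular, Γ_f contains a horizontal line segment through each point lying over U. -/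
open MeasureTheory Set

/-! Along an integral curve `γ` of `∂_x − f ∂_z`, every `C¹` function `g` satisfies
`(g ∘ γ)' = ∇_f g ∘ γ`. Hence `∇_f f ∘ γ` is a constant `c` (because `∇_f² f = 0`), so
`f ∘ γ` has slope `c`, and the lift `λ = (γ_x, f ∘ γ, γ_z + γ_x f(γ)/2)` has velocity
`(1, c, (c γ_x − f ∘ γ)/2)`, whose last entry again has derivative `(c − c)/2 = 0`.
A curve with constant velocity on an interval is affine. -/

section VectorCurves

variable {E : Type*} [NormedAddCommGroup E] [NormedSpace ℝ E] {φ : ℝ → E} {I : Set ℝ}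

theorem Convex.exists_eq_add_smul_of_hasDerivWithinAt (hI : Convex ℝ I) {v : E}
    (hφ : ∀ t ∈ I, HasDerivWithinAt φ v I t) : ∃ p : E, ∀ t ∈ I, φ t = p + t • v := by
  rcases I.eq_empty_or_nonempty with rfl | ⟨t₀, ht₀⟩
  · exact ⟨0, by simp⟩
  refine ⟨φ t₀ - t₀ • v, fun t ht => ?_⟩
  have hψ : ∀ s ∈ I, HasDerivWithinAt (fun s => φ s - s • v) 0 I s := fun s hs => by
    convert (hφ s hs).sub ((hasDerivWithinAt_id s I).smul_const v) using 1
    · rfl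
    · simp
  have hbound := hI.norm_image_sub_le_of_norm_hasDerivWithin_le hψ (C := 0)
    (fun _ _ => norm_zero.le) ht₀ ht
  rw [zero_mul, norm_le_zero_iff, sub_eq_zero] at hbound
  rw [← hbound]
  abel

theorem Convex.exists_forall_eq_of_hasDerivWithinAt_zero (hI : Convex ℝ I)
    (hφ : ∀ t ∈ I, HasDerivWithinAt φ 0 I t) : ∃ c : E, ∀ t ∈ I, φ t = c := by
  simpa using hI.exists_eq_add_smul_of_hasDerivWithinAt hφ

variable {F : Type*} [NormedAddCommGroup F] [NormedSpace ℝ F] {γ : ℝ → E × F} {a : E} {b : F}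
  {t : ℝ}

theorem HasDerivWithinAt.fst (h : HasDerivWithinAt γ (a, b) I t) :
    HasDerivWithinAt (fun t => (γ t).1) a I t :=
  (ContinuousLinearMap.fst ℝ E F).hasFDerivAt.comp_hasDerivWithinAt t h

theorem HasDerivWithinAt.snd (h : HasDerivWithinAt γ (a, b) I t) :
    HasDerivWithinAt (fun t => (γ t).2) b I t :=
  (ContinuousLinearMap.snd ℝ E F).hasFDerivAt.comp_hasDerivWithinAt t h

end VectorCurves

/-- The parametrisation `(x, z) ↦ (x, f(x,z), z + x f(x,z)/2)` of the intrinsic graph `Γ_f`. -/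
noncomputable def intrinsicGraphMap (f : ℝ × ℝ → ℝ) (p : ℝ × ℝ) : ℝ × ℝ × ℝ :=
  (p.1, f p, p.2 + p.1 * f p / 2)

theorem ContDiffOn.igrad {U : Set (ℝ × ℝ)} (hU : IsOpen U) {f g : ℝ × ℝ → ℝ}
    (hf : ContDiffOn ℝ 1 f U) (hg : ContDiffOn ℝ 2 g U) : ContDiffOn ℝ 1 (igrad f g) U := by
  have hdg : ContDiffOn ℝ 1 (fderiv ℝ g) U := hg.fderiv_of_isOpen hU (by norm_num)
  exact (hdg.clm_apply contDiffOn_const).sub (hf.mul (hdg.clm_apply contDiffOn_const))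

section IntegralCurve

variable {f g : ℝ × ℝ → ℝ} {γ : ℝ → ℝ × ℝ} {s : Set ℝ} {t : ℝ}

theorem DifferentiableAt.hasDerivWithinAt_comp_integralCurve (hg : DifferentiableAt ℝ g (γ t))
    (hγ : HasDerivWithinAt γ (1, -f (γ t)) s t) :
    HasDerivWithinAt (fun t => g (γ t)) (igrad f g (γ t)) s t := by
  have hvec : ((1 : ℝ), -f (γ t)) = ((1 : ℝ), (0 : ℝ)) - f (γ t) • ((0 : ℝ), (1 : ℝ)) := by
    simp
  have h := hg.hasFDerivAt.comp_hasDerivWithinAt t hγ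
  rwa [hvec, map_sub, map_smul, smul_eq_mul] at h

theorem DifferentiableAt.hasDerivWithinAt_intrinsicGraphMap_comp_integralCurve
    (hf : DifferentiableAt ℝ f (γ t)) (hγ : HasDerivWithinAt γ (1, -f (γ t)) s t) :
    HasDerivWithinAt (fun t => intrinsicGraphMap f (γ t))
      (1, igrad f f (γ t), ((γ t).1 * igrad f f (γ t) - f (γ t)) / 2) s t := by
  have hx : HasDerivWithinAt (fun t => (γ t).1) 1 s t := hγ.fst
  have hz : HasDerivWithinAt (fun t => (γ t).2) (-f (γ t)) s t := hγ.snd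
  have hfγ := hf.hasDerivWithinAt_comp_integralCurve hγ
  refine (hx.prodMk (hfγ.prodMk (hz.add ((hx.mul hfγ).div_const 2)))).congr_deriv ?_
  congr 2
  ring

end IntegralCurve

/-- if `f` is C² on an open set `U` with `∇_f² f = 0` on `U`, and
`γ : I → U` is a C¹ integral curve of the intrinsic gradient field (`γ_x' = 1`,
`γ_z' = −f∘γ`) on an interval `I`, then the lifted curve
`λ(t) = (γ_x(t), f(γ(t)), γ_z(t) + γ_x(t)·f(γ(t))/2)` in the intrinsic graph `Γ_f` is
affine: `λ(t) = p + t·v` for some `p, v ∈ ℝ³`. -/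
theorem stmt14 (U : Set (ℝ × ℝ)) (hU : IsOpen U) (f : ℝ × ℝ → ℝ)
    (hf : ContDiffOn ℝ 2 f U)
    (hharm : ∀ p ∈ U, igrad f (igrad f f) p = 0)
    (I : Set ℝ) (hI : I.OrdConnected)
    (γ : ℝ → ℝ × ℝ) (hγU : ∀ t ∈ I, γ t ∈ U)
    (hγ : ∀ t ∈ I, HasDerivWithinAt γ (1, -f (γ t)) I t) :
    ∃ p v : ℝ × ℝ × ℝ, ∀ t ∈ I,
      ((γ t).1, f (γ t), (γ t).2 + (γ t).1 * f (γ t) / 2) = p + t • v := by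
  have hconv : Convex ℝ I := hI.convex
  have hdf : ∀ t ∈ I, DifferentiableAt ℝ f (γ t) := fun t ht =>
    (hf.contDiffAt (hU.mem_nhds (hγU t ht))).differentiableAt two_ne_zero
  have hdG : ∀ t ∈ I, DifferentiableAt ℝ (igrad f f) (γ t) := fun t ht =>
    ((ContDiffOn.igrad hU (hf.of_le one_le_two) hf).contDiffAt
      (hU.mem_nhds (hγU t ht))).differentiableAt one_ne_zero
  obtain ⟨c, hc⟩ : ∃ c : ℝ, ∀ t ∈ I, igrad f f (γ t) = c :=
    hconv.exists_forall_eq_of_hasDerivWithinAt_zero fun t ht => by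
      simpa [hharm _ (hγU t ht)] using (hdG t ht).hasDerivWithinAt_comp_integralCurve (hγ t ht)
  obtain ⟨m, hm⟩ : ∃ m : ℝ, ∀ t ∈ I, ((γ t).1 * c - f (γ t)) / 2 = m :=
    hconv.exists_forall_eq_of_hasDerivWithinAt_zero fun t ht => by
      have hfγ := (hdf t ht).hasDerivWithinAt_comp_integralCurve (hγ t ht)
      simpa [hc t ht] using (((hγ t ht).fst.mul_const c).sub hfγ).div_const 2
  obtain ⟨p, hp⟩ := hconv.exists_eq_add_smul_of_hasDerivWithinAt (v := ((1 : ℝ), c, m))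
    fun t ht => by
      simpa [hc t ht, hm t ht] using
        (hdf t ht).hasDerivWithinAt_intrinsicGraphMap_comp_integralCurve (hγ t ht)
  exact ⟨p, _, hp⟩
end
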